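/- arXiv:1806.11388 — 3 statements merged into one kernel-verified Lean document; each statement's English description precedes it below -/
import Mathlib

section
/- (SMLE Consistency, Theorem 1, full K-step version.) Let (Ω, 𝓕, P) be a probability space and K ≥ 2 an integer. For k = 1, …, K let p_k be a positive integer, and for k = 2, …, K let q_k be a positive integer and π_k : ℝ^{p_1} × ⋯ × ℝ^{p_{k−1}} → ℝ^{q_k} a continuous linear map (a coordinate projection selecting the nuisance parameters from earlier primary-parameter blocks). Fix true values θ_k* ∈ ℝ^{p_k} for each k, and set η_k* = π_k(θ_1*, …, θ_{k−1}*) for k ≥ 2. Let θ̂_1 : ℕ → Ω → ℝ^{p_1} be measurable, and for k = 2, …, K let θ̂_k : ℕ → Ω × ℝ^{q_k} → ℝ^{p_k} be jointly measurable. For a multi-index n = (n_1, …, n_K) ∈ ℕ^K, define recursively η̂_2(n, ω) = π_2(θ̂_1(n_1, ω)) and, for k ≥ 3, η̂_k(n, ω) = π_k(θ̂_1(n_1, ω), θ̂_2(n_2, ω, η̂_2(n, ω)), …, θ̂_{k−1}(n_{k−1}, ω, η̂_{k−1}(n, ω))). Assume: (i) θ̂_1(n_1, ·) converges in probability to θ_1*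 along the filter atTop in n_1; (ii) for each k ∈ {2, …, K}, θ̂_k(n_k, ·, η_k*) converges in probability to θ_k* along atTop in n_k; (iii) for each k ∈ {2, …, K} there exist n_{k0} ∈ ℕ, δ_k > 0 and B_k ≥ 0 such that for every n_k > n_{k0}, for P-almost every ω, the map η ↦ θ̂_k(n_k, ω, η) is Fréchet differentiable at every point of the open ball of radius δ_k centered at η_k*, with derivative of operator norm at most B_k on that ball. Then for every k ∈ {2, …, K}, the plug-in estimator (n, ω) ↦ θ̂_k(n_k, ω, η̂_k(n, ω)) converges in probability to θ_k* along the product filter atTop ×ˢ ⋯ ×ˢ atTop on ℕ^k (i.e., as n_1, …, n_k → ∞ jointly). -/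
open MeasureTheory Filter

/-- The stepwise (plug-in) estimators of the SMLE procedure.  Step `0` estimates the
first primary-parameter block; step `k+1` plugs the nuisance-parameter estimate
`η̂_{k+1} = π_{k+1}(θ̂₀, …, θ̂ₖ)`, built from the estimates of earlier blocks, into the
`(k+1)`-st estimator. -/
noncomputable def smleEstimator {Ω : Type*} (p q : ℕ → ℕ)
    (π : (k : ℕ) → ((i : Fin k) → EuclideanSpace ℝ (Fin (p i))) →L[ℝ]
      EuclideanSpace ℝ (Fin (q k)))
    (θhat0 : ℕ → Ω → EuclideanSpace ℝ (Fin (p 0)))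
    (θhat : (k : ℕ) → ℕ → Ω × EuclideanSpace ℝ (Fin (q k)) → EuclideanSpace ℝ (Fin (p k))) :
    (k : ℕ) → (ℕ → ℕ) → Ω → EuclideanSpace ℝ (Fin (p k))
  | 0, n, ω => θhat0 (n 0) ω
  | (k + 1), n, ω => θhat (k + 1) (n (k + 1))
      (ω, π (k + 1) (fun i => smleEstimator p q π θhat0 θhat i n ω))
  termination_by k => k
  decreasing_by exact i.isLt

open Metric Topology

/-! A plug-in estimator `θ̂(η̂)` is consistent as soon as `η̂ → η*` in probability, `θ̂(η*)` is
consistent, and `η ↦ θ̂(η)` is, with probability one and for all large sample sizes, equicontinuous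
at `η*`: off an event of small probability `η̂` lies in a small ball around `η*`, where `θ̂(η̂)` and
`θ̂(η*)` are close. A derivative bounded near `η*` gives this equicontinuity through the mean value
inequality. By strong induction on the step, the estimates of all earlier blocks converge, hence so
does the nuisance estimate `η̂_k = π_k(θ̂₀, …, θ̂_{k-1})`, and the plug-in step applies. -/

namespace MeasureTheory

variable {α ι : Type*} [MeasurableSpace α] {μ : Measure α} {l : Filter ι}

theorem tendstoInMeasure_pi {κ : Type*} [Fintype κ] {E : κ → Type*}
    [∀ j, PseudoMetricSpace (E j)] {f : (j : κ) → ι → α → E j} {c : (j : κ) → E j}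
    (hf : ∀ j, TendstoInMeasure μ (f j) l (fun _ => c j)) :
    TendstoInMeasure μ (fun i ω j => f j i ω) l (fun _ => c) := by
  rw [tendstoInMeasure_iff_dist]
  intro ε hε
  have hsum : Tendsto (fun i => ∑ j, μ {ω | ε ≤ dist (f j i ω) (c j)}) l (𝓝 0) := by
    simpa using tendsto_finsetSum Finset.univ
      fun j _ => tendstoInMeasure_iff_dist.1 (hf j) ε hε
  refine tendsto_of_tendsto_of_tendsto_of_le_of_le tendsto_const_nhds hsum (fun _ => zero_le)
    fun i => (measure_mono fun ω hω => ?_).trans (measure_iUnion_fintype_le μ _)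
  by_contra hnot
  simp only [Set.mem_iUnion, Set.mem_ofPred_eq, not_exists, not_le] at hω hnot
  exact hω.not_gt ((dist_pi_lt_iff hε).2 hnot)

namespace TendstoInMeasure

variable {E F : Type*} [PseudoMetricSpace E] [PseudoMetricSpace F]

theorem comp_continuousAt {f : ι → α → E} {c : E} {φ : E → F}
    (hf : TendstoInMeasure μ f l (fun _ => c)) (hφ : ContinuousAt φ c) :
    TendstoInMeasure μ (fun i ω => φ (f i ω)) l (fun _ => φ c) := by
  rw [tendstoInMeasure_iff_dist] at hf ⊢
  intro ε hε
  obtain ⟨δ, hδ, hφδ⟩ := Metric.continuousAt_iff.1 hφ ε hε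
  refine tendsto_of_tendsto_of_tendsto_of_le_of_le tendsto_const_nhds (hf δ hδ) (fun _ => zero_le)
    fun i => measure_mono fun ω hω => ?_
  by_contra hnot
  exact (hφδ (not_le.1 hnot)).not_ge hω

theorem apply_of_eventually_ae_equicontinuousAt {g : ι → α → E → F} {X : ι → α → E} {c : E}
    {θ : F} (hX : TendstoInMeasure μ X l (fun _ => c))
    (hg : TendstoInMeasure μ (fun i ω => g i ω c) l (fun _ => θ))
    (hequi : ∀ ε > 0, ∃ δ > 0, ∀ᶠ i in l, ∀ᵐ ω ∂μ, ∀ x, dist x c < δ →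
      dist (g i ω x) (g i ω c) < ε) :
    TendstoInMeasure μ (fun i ω => g i ω (X i ω)) l (fun _ => θ) := by
  rw [tendstoInMeasure_iff_dist] at hX hg ⊢
  intro ε hε
  obtain ⟨δ, hδ, hequiδ⟩ := hequi (ε / 2) (half_pos hε)
  refine tendsto_of_tendsto_of_tendsto_of_le_of_le' tendsto_const_nhds
    (by simpa using (hX δ hδ).add (hg (ε / 2) (half_pos hε)))
    (Eventually.of_forall fun _ => zero_le)
    (hequiδ.mono fun i hi => (measure_mono_ae ?_).trans (measure_union_le _ _))
  filter_upwards [hi] with ω hω (hbad : ε ≤ dist (g i ω (X i ω)) θ)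
  show δ ≤ dist (X i ω) c ∨ ε / 2 ≤ dist (g i ω c) θ
  by_contra! hgood
  linarith [hω _ hgood.1, dist_triangle (g i ω (X i ω)) (g i ω c) θ]

end TendstoInMeasure

end MeasureTheory

section MeanValue

variable {E F : Type*} [NormedAddCommGroup E] [NormedSpace ℝ E]
  [NormedAddCommGroup F] [NormedSpace ℝ F]

theorem dist_le_mul_dist_of_forall_hasFDerivAt_norm_le {f : E → F} {c x : E} {δ B : ℝ}
    (hf : ∀ η ∈ ball c δ, ∃ D : E →L[ℝ] F, HasFDerivAt f D η ∧ ‖D‖ ≤ B)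
    (hx : x ∈ ball c δ) : dist (f x) (f c) ≤ B * dist x c := by
  choose! D hD using hf
  simpa only [dist_eq_norm] using (convex_ball c δ).norm_image_sub_le_of_norm_hasFDerivWithin_le
    (fun η hη => (hD η hη).1.hasFDerivWithinAt) (fun η hη => (hD η hη).2)
    (mem_ball_self (pos_of_mem_ball hx)) hx

theorem eventually_ae_equicontinuousAt_of_hasFDerivAt {α ι : Type*} [MeasurableSpace α]
    {μ : Measure α} {l : Filter ι} {g : ι → α → E → F} {c : E} {δ B : ℝ} (hδ : 0 < δ)
    (hB : 0 ≤ B) (hg : ∀ᶠ i in l, ∀ᵐ ω ∂μ, ∀ η ∈ ball c δ,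
      ∃ D : E →L[ℝ] F, HasFDerivAt (g i ω) D η ∧ ‖D‖ ≤ B) :
    ∀ ε > 0, ∃ δ' > 0, ∀ᶠ i in l, ∀ᵐ ω ∂μ, ∀ x, dist x c < δ' →
      dist (g i ω x) (g i ω c) < ε := by
  intro ε hε
  refine ⟨min δ (ε / (B + 1)), by positivity, hg.mono fun i hi => hi.mono fun ω hω x hx => ?_⟩
  have hxε : dist x c < ε / (B + 1) := hx.trans_le (min_le_right _ _)
  calc dist (g i ω x) (g i ω c)
      ≤ B * dist x c :=
        dist_le_mul_dist_of_forall_hasFDerivAt_norm_le hω (hx.trans_le (min_le_left _ _))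
    _ ≤ (B + 1) * dist x c := by nlinarith [dist_nonneg (x := x) (y := c)]
    _ < ε := by rwa [← lt_div_iff₀' (by positivity)]

end MeanValue

section SmleEstimator

variable {Ω : Type*} {p q : ℕ → ℕ}
  {π : (k : ℕ) → ((i : Fin k) → EuclideanSpace ℝ (Fin (p i))) →L[ℝ]
    EuclideanSpace ℝ (Fin (q k))}
  {θhat0 : ℕ → Ω → EuclideanSpace ℝ (Fin (p 0))}
  {θhat : (k : ℕ) → ℕ → Ω × EuclideanSpace ℝ (Fin (q k)) → EuclideanSpace ℝ (Fin (p k))}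

theorem smleEstimator_zero (n : ℕ → ℕ) :
    smleEstimator p q π θhat0 θhat 0 n = θhat0 (n 0) := by
  ext1 ω
  rw [smleEstimator]

theorem smleEstimator_succ (k : ℕ) (n : ℕ → ℕ) :
    smleEstimator p q π θhat0 θhat (k + 1) n = fun ω => θhat (k + 1) (n (k + 1))
      (ω, π (k + 1) (fun i => smleEstimator p q π θhat0 θhat i n ω)) := by
  ext1 ω
  rw [smleEstimator]

end SmleEstimator

theorem tendstoInMeasure_smleEstimator {Ω : Type*} [MeasurableSpace Ω] {P : Measure Ω} {K : ℕ}
    {p q : ℕ → ℕ}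
    {π : (k : ℕ) → ((i : Fin k) → EuclideanSpace ℝ (Fin (p i))) →L[ℝ]
      EuclideanSpace ℝ (Fin (q k))}
    {θstar : (k : ℕ) → EuclideanSpace ℝ (Fin (p k))}
    {θhat0 : ℕ → Ω → EuclideanSpace ℝ (Fin (p 0))}
    {θhat : (k : ℕ) → ℕ → Ω × EuclideanSpace ℝ (Fin (q k)) → EuclideanSpace ℝ (Fin (p k))}
    (h1 : TendstoInMeasure P θhat0 atTop (fun _ => θstar 0))
    (h2 : ∀ k, 1 ≤ k → k < K →
      TendstoInMeasure P (fun n ω => θhat k n (ω, π k (fun i => θstar i)))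
        atTop (fun _ => θstar k))
    (h3 : ∀ k, 1 ≤ k → k < K → ∃ n₀ : ℕ, ∃ δ > (0 : ℝ), ∃ B : ℝ, 0 ≤ B ∧ ∀ n > n₀,
      ∀ᵐ ω ∂P, ∀ η ∈ ball (π k (fun i => θstar i)) δ,
        ∃ D : EuclideanSpace ℝ (Fin (q k)) →L[ℝ] EuclideanSpace ℝ (Fin (p k)),
          HasFDerivAt (fun η' => θhat k n (ω, η')) D η ∧ ‖D‖ ≤ B)
    {ι : Type*} {l : Filter ι} {N : ι → ℕ → ℕ} (k : ℕ) (hk : k < K)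
    (hN : ∀ i ≤ k, Tendsto (fun a => N a i) l atTop) :
    TendstoInMeasure P (fun a => smleEstimator p q π θhat0 θhat k (N a)) l
      (fun _ => θstar k) := by
  induction k using Nat.strong_induction_on with
  | _ k IH =>
  cases k with
  | zero =>
    simp only [smleEstimator_zero]
    exact h1.comp (hN 0 le_rfl)
  | succ k =>
    have hblocks : ∀ i : Fin (k + 1), TendstoInMeasure P
        (fun a => smleEstimator p q π θhat0 θhat i (N a)) l (fun _ => θstar i) :=
      fun i => IH i (by omega) (by omega) fun j hj => hN j (by omega)
    have hη := (tendstoInMeasure_pi hblocks).comp_continuousAt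
      (π (k + 1)).continuous.continuousAt
    have hlast := hN (k + 1) le_rfl
    obtain ⟨n₀, δ, hδ, B, hB, hderiv⟩ := h3 (k + 1) (by omega) hk
    have hequi := eventually_ae_equicontinuousAt_of_hasFDerivAt (μ := P) hδ hB
      (hlast.eventually (eventually_gt_atTop n₀) |>.mono fun a ha => hderiv (N a (k + 1)) ha)
    simpa only [smleEstimator_succ] using
      hη.apply_of_eventually_ae_equicontinuousAt
        (g := fun a ω η => θhat (k + 1) (N a (k + 1)) (ω, η))
        ((h2 (k + 1) (by omega) hk).comp hlast) hequi

theorem smle_consistency_general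
    {Ω : Type*} [MeasurableSpace Ω] (P : Measure Ω)
    (K : ℕ)
    (p q : ℕ → ℕ)
    (π : (k : ℕ) → ((i : Fin k) → EuclideanSpace ℝ (Fin (p i))) →L[ℝ]
      EuclideanSpace ℝ (Fin (q k)))
    (θstar : (k : ℕ) → EuclideanSpace ℝ (Fin (p k)))
    (θhat0 : ℕ → Ω → EuclideanSpace ℝ (Fin (p 0)))
    (θhat : (k : ℕ) → ℕ → Ω × EuclideanSpace ℝ (Fin (q k)) → EuclideanSpace ℝ (Fin (p k)))
    (h1 : TendstoInMeasure P (fun n ω => θhat0 n ω) atTop (fun _ => θstar 0))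
    (h2 : ∀ k, 1 ≤ k → k < K →
      TendstoInMeasure P (fun n ω => θhat k n (ω, π k (fun i => θstar i)))
        atTop (fun _ => θstar k))
    (h3 : ∀ k, 1 ≤ k → k < K → ∃ n₀ : ℕ, ∃ δ > (0 : ℝ), ∃ B : ℝ, 0 ≤ B ∧ ∀ n > n₀,
      ∀ᵐ ω ∂P, ∀ η ∈ Metric.ball (π k (fun i => θstar i)) δ,
        ∃ D : EuclideanSpace ℝ (Fin (q k)) →L[ℝ] EuclideanSpace ℝ (Fin (p k)),
          HasFDerivAt (fun η' => θhat k n (ω, η')) D η ∧ ‖D‖ ≤ B) :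
    ∀ k, 1 ≤ k → k < K →
      TendstoInMeasure P
        (fun (n : Fin (k + 1) → ℕ) ω =>
          smleEstimator p q π θhat0 θhat k
            (fun i => if h : i < k + 1 then n ⟨i, h⟩ else 0) ω)
        (Filter.pi fun _ => atTop) (fun _ => θstar k) := by
  intro k _ hk
  refine tendstoInMeasure_smleEstimator h1 h2 h3 k hk fun i hi => ?_
  simpa only [dif_pos (Nat.lt_succ_of_le hi)] using
    tendsto_eval_pi (fun _ : Fin (k + 1) => atTop) ⟨i, Nat.lt_succ_of_le hi⟩

/-- **SMLE consistency** (Theorem 1, full `K`-step version).  Blocks are indexed by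
`k = 0, …, K-1` (so the paper's step `k ∈ {1, …, K}` is `k-1` here).  If the first-step
estimator is consistent, each later-step estimator is consistent when evaluated at the
true nuisance parameters `η_k* = π_k(θ₀*, …, θ_{k-1}*)`, and each later-step estimator
is a.s. differentiable in the nuisance parameters with uniformly bounded derivative near
`η_k*` for all large sample sizes, then every plug-in estimator of the stepwise
procedure is consistent as `n₀, …, n_k → ∞` jointly. -/
theorem smle_consistency
    {Ω : Type*} [MeasurableSpace Ω] (P : Measure Ω) [IsProbabilityMeasure P]
    (K : ℕ) (hK : 2 ≤ K)
    (p q : ℕ → ℕ) (hp : ∀ k, k < K → 0 < p k) (hq : ∀ k, 1 ≤ k → k < K → 0 < q k)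
    (π : (k : ℕ) → ((i : Fin k) → EuclideanSpace ℝ (Fin (p i))) →L[ℝ]
      EuclideanSpace ℝ (Fin (q k)))
    (θstar : (k : ℕ) → EuclideanSpace ℝ (Fin (p k)))
    (θhat0 : ℕ → Ω → EuclideanSpace ℝ (Fin (p 0)))
    (θhat : (k : ℕ) → ℕ → Ω × EuclideanSpace ℝ (Fin (q k)) → EuclideanSpace ℝ (Fin (p k)))
    (hmeas0 : ∀ n, Measurable (θhat0 n))
    (hmeas : ∀ k n, Measurable (θhat k n))
    (h1 : TendstoInMeasure P (fun n ω => θhat0 n ω) atTop (fun _ => θstar 0))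
    (h2 : ∀ k, 1 ≤ k → k < K →
      TendstoInMeasure P (fun n ω => θhat k n (ω, π k (fun i => θstar i)))
        atTop (fun _ => θstar k))
    (h3 : ∀ k, 1 ≤ k → k < K → ∃ n₀ : ℕ, ∃ δ > (0 : ℝ), ∃ B : ℝ, 0 ≤ B ∧ ∀ n > n₀,
      ∀ᵐ ω ∂P, ∀ η ∈ Metric.ball (π k (fun i => θstar i)) δ,
        ∃ D : EuclideanSpace ℝ (Fin (q k)) →L[ℝ] EuclideanSpace ℝ (Fin (p k)),
          HasFDerivAt (fun η' => θhat k n (ω, η')) D η ∧ ‖D‖ ≤ B) :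
    ∀ k, 1 ≤ k → k < K →
      TendstoInMeasure P
        (fun (n : Fin (k + 1) → ℕ) ω =>
          smleEstimator p q π θhat0 θhat k
            (fun i => if h : i < k + 1 then n ⟨i, h⟩ else 0) ω)
        (Filter.pi fun _ => atTop) (fun _ => θstar k) :=
  smle_consistency_general P K p q π θstar θhat0 θhat h1 h2 h3
end

section
/- (Plug-in consistency: the inductive step of the SMLE consistency theorem, derivative-bound version.) Let (Ω, 𝓕, P) be a probability space, p, q positive integers, η* ∈ ℝ^q and θ* ∈ ℝ^p. Let η̂ : ℕ → Ω → ℝ^q be measurable and θ̂ : ℕ → Ω × ℝ^q → ℝ^p be jointly measurable. Assume: (i) η̂_m converges in probability to η* along atTop in m; (ii) θ̂_n(·, η*) converges in probability to θ* along atTop in n; (iii) there exist n_0 ∈ ℕ, δ > 0 and B ≥ 0 such that for every n > n_0, for P-almost every ω, the map η ↦ θ̂_n(ω, η) is Fréchet differentiable at every point of the open ball of radius δ centered at η*, with derivative of operator norm at most B on that ball. Then the plug-in estimator (n, m, ω) ↦ θ̂_n(ω, η̂_m(ω)) converges in probability to θ* along the product filter atTop ×ˢ atTop on ℕ × ℕ.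 -/
/-!
By the mean value theorem, the derivative bound makes `η ↦ θ̂ₙ(ω, η)` `B`-Lipschitz on the ball
around `η*`, so on the event `‖η̂ₘ - η*‖ < δ` the plug-in error is at most
`‖θ̂ₙ(·, η*) - θ*‖ + B ‖η̂ₘ - η*‖`. Both terms are small in probability, and the event has
probability tending to one.
-/

open MeasureTheory Filter Topology

theorem Convex.norm_image_sub_le_of_forall_hasFDerivAt_norm_le {E F : Type*}
    [NormedAddCommGroup E] [NormedSpace ℝ E] [NormedAddCommGroup F] [NormedSpace ℝ F]
    {f : E → F} {s : Set E} {B : ℝ} (hs : Convex ℝ s)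
    (hf : ∀ x ∈ s, ∃ D : E →L[ℝ] F, HasFDerivAt f D x ∧ ‖D‖ ≤ B) {x y : E}
    (hx : x ∈ s) (hy : y ∈ s) :
    ‖f y - f x‖ ≤ B * ‖y - x‖ := by
  refine hs.norm_image_sub_le_of_norm_fderiv_le (𝕜 := ℝ) (fun z hz => ?_) (fun z hz => ?_) hx hy
  · obtain ⟨D, hD, -⟩ := hf z hz
    exact hD.differentiableAt
  · obtain ⟨D, hD, hDB⟩ := hf z hz
    rwa [hD.fderiv]

namespace MeasureTheory

variable {Ω ι E F : Type*} [MeasurableSpace Ω] {μ : Measure Ω} {l : Filter ι}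
  [PseudoMetricSpace E] [PseudoMetricSpace F]

theorem TendstoInMeasure.of_dist_le_mul_dist {f h : ι → Ω → F} {g : ι → Ω → E} {c : F} {b : E}
    {δ K : ℝ} (hf : TendstoInMeasure μ f l fun _ => c) (hg : TendstoInMeasure μ g l fun _ => b)
    (hδ : 0 < δ) (hK : 0 ≤ K)
    (hfh : ∀ᶠ i in l, ∀ᵐ ω ∂μ,
      dist (g i ω) b < δ → dist (h i ω) (f i ω) ≤ K * dist (g i ω) b) :
    TendstoInMeasure μ h l fun _ => c := by
  rw [tendstoInMeasure_iff_dist] at hf hg ⊢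
  intro ε hε
  -- `r ≤ δ` puts `g i ω` in the region of the bound, `(K + 1) r ≤ ε / 2` makes that bound small.
  set r := min δ (ε / (2 * (K + 1)))
  have hr : 0 < r := lt_min hδ (by positivity)
  have hKr : (K + 1) * r ≤ ε / 2 := by
    have := min_le_right δ (ε / (2 * (K + 1)))
    rw [le_div_iff₀ (by positivity)] at this
    linarith
  have hbound : ∀ᶠ i in l, μ {ω | ε ≤ dist (h i ω) c}
      ≤ μ {ω | ε / 2 ≤ dist (f i ω) c} + μ {ω | r ≤ dist (g i ω) b} := by
    filter_upwards [hfh] with i hi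
    refine (measure_mono_ae ?_).trans (measure_union_le _ _)
    filter_upwards [hi] with ω hω
    show ε ≤ dist (h i ω) c → ε / 2 ≤ dist (f i ω) c ∨ r ≤ dist (g i ω) b
    contrapose!
    rintro ⟨hfc, hgb⟩
    have hperturb : K * dist (g i ω) b ≤ ε / 2 := by
      nlinarith [dist_nonneg (x := g i ω) (y := b)]
    have hlip := hω (hgb.trans_le (min_le_left _ _))
    linarith [dist_triangle (h i ω) (f i ω) c]
  have hsum := (hf (ε / 2) (by positivity)).add (hg r hr)
  rw [add_zero] at hsum
  exact tendsto_of_tendsto_of_tendsto_of_le_of_le' tendsto_const_nhds hsum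
    (Eventually.of_forall fun _ => zero_le) hbound

end MeasureTheory

theorem plugin_consistency_deriv_general
    {Ω : Type*} [MeasurableSpace Ω] (P : Measure Ω)
    (p q : ℕ)
    (ηstar : EuclideanSpace ℝ (Fin q)) (θstar : EuclideanSpace ℝ (Fin p))
    (ηhat : ℕ → Ω → EuclideanSpace ℝ (Fin q))
    (θhat : ℕ → Ω × EuclideanSpace ℝ (Fin q) → EuclideanSpace ℝ (Fin p))
    (hi : TendstoInMeasure P (fun m ω => ηhat m ω) atTop (fun _ => ηstar))
    (hii : TendstoInMeasure P (fun n ω => θhat n (ω, ηstar)) atTop (fun _ => θstar))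
    (hiii : ∃ n₀ : ℕ, ∃ δ > (0 : ℝ), ∃ B : ℝ, 0 ≤ B ∧ ∀ n > n₀,
      ∀ᵐ ω ∂P, ∀ η ∈ Metric.ball ηstar δ,
        ∃ D : EuclideanSpace ℝ (Fin q) →L[ℝ] EuclideanSpace ℝ (Fin p),
          HasFDerivAt (fun η' => θhat n (ω, η')) D η ∧ ‖D‖ ≤ B) :
    TendstoInMeasure P (fun nm : ℕ × ℕ => fun ω => θhat nm.1 (ω, ηhat nm.2 ω))
      (atTop ×ˢ atTop) (fun _ => θstar) := by
  obtain ⟨n₀, δ, hδ, B, hB, hderiv⟩ := hiii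
  refine (hii.comp tendsto_fst).of_dist_le_mul_dist (hi.comp tendsto_snd) hδ hB ?_
  filter_upwards [tendsto_fst.eventually (eventually_gt_atTop n₀)] with nm hn
  filter_upwards [hderiv nm.1 hn] with ω hω hclose
  simpa only [Function.comp_apply, dist_eq_norm] using
    (convex_ball ηstar δ).norm_image_sub_le_of_forall_hasFDerivAt_norm_le hω
      (Metric.mem_ball_self hδ) (Metric.mem_ball.2 hclose)

/-- **Plug-in consistency** (inductive step of the SMLE consistency theorem,
derivative-bound version).  If `η̂ₘ` is consistent for `η*`, `θ̂ₙ(·, η*)` is consistent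
for `θ*`, and for all large `n` the map `η ↦ θ̂ₙ(ω, η)` is a.s. differentiable with
uniformly bounded derivative on a ball around `η*`, then the plug-in estimator
`θ̂ₙ(·, η̂ₘ(·))` is consistent for `θ*` as `n, m → ∞` jointly. -/
theorem plugin_consistency_deriv
    {Ω : Type*} [MeasurableSpace Ω] (P : Measure Ω) [IsProbabilityMeasure P]
    (p q : ℕ) (hp : 0 < p) (hq : 0 < q)
    (ηstar : EuclideanSpace ℝ (Fin q)) (θstar : EuclideanSpace ℝ (Fin p))
    (ηhat : ℕ → Ω → EuclideanSpace ℝ (Fin q))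
    (θhat : ℕ → Ω × EuclideanSpace ℝ (Fin q) → EuclideanSpace ℝ (Fin p))
    (hηmeas : ∀ m, Measurable (ηhat m))
    (hθmeas : ∀ n, Measurable (θhat n))
    (hi : TendstoInMeasure P (fun m ω => ηhat m ω) atTop (fun _ => ηstar))
    (hii : TendstoInMeasure P (fun n ω => θhat n (ω, ηstar)) atTop (fun _ => θstar))
    (hiii : ∃ n₀ : ℕ, ∃ δ > (0 : ℝ), ∃ B : ℝ, 0 ≤ B ∧ ∀ n > n₀,
      ∀ᵐ ω ∂P, ∀ η ∈ Metric.ball ηstar δ,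
        ∃ D : EuclideanSpace ℝ (Fin q) →L[ℝ] EuclideanSpace ℝ (Fin p),
          HasFDerivAt (fun η' => θhat n (ω, η')) D η ∧ ‖D‖ ≤ B) :
    TendstoInMeasure P (fun nm : ℕ × ℕ => fun ω => θhat nm.1 (ω, ηhat nm.2 ω))
      (atTop ×ˢ atTop) (fun _ => θstar) :=
  plugin_consistency_deriv_general P p q ηstar θstar ηhat θhat hi hii hiii
end

section
/- (Plug-in consistency, Lipschitz version.) Let (Ω, 𝓕, P) be a probability space, p, q positive integers, η* ∈ ℝ^q and θ* ∈ ℝ^p. Let η̂ : ℕ → Ω → ℝ^q be measurable and θ̂ : ℕ → Ω × ℝ^q → ℝ^p be jointly measurable. Assume: (i) η̂_m converges in probability to η* along atTop in m; (ii) θ̂_n(·, η*) converges in probability to θ* along atTop in n; (iii) there exist n_0 ∈ ℕ, δ > 0 and B ≥ 0 such that for every n > n_0, for P-almost every ω, the map η ↦ θ̂_n(ω, η) is Lipschitz with constant B on the open ball of radius δ centered at η*. Then the plug-in estimator (n, m, ω) ↦ θ̂_n(ω, η̂_m(ω)) converges in probability to θ* along the product filter atTop ×ˢ atTop on ℕ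 × ℕ. -/
open MeasureTheory Filter
open scoped NNReal

/-! Where `η̂ₘ` lies within `δ` of `η*` and the Lipschitz bound holds, the triangle inequality gives
`dist (θ̂ₙ(η̂ₘ)) θ* ≤ dist (θ̂ₙ(η*)) θ* + B · dist η̂ₘ η*`. Hence the event that the plug-in estimator
is `ε`-far from `θ*` is covered, up to a null set, by the event that `η̂ₘ` is `r`-far from `η*`
(`r = min δ (ε / (2(B+1)))`) and the event that `θ̂ₙ(η*)` is `ε/2`-far from `θ*`; both
probabilities vanish as `n, m → ∞`. -/

theorem LipschitzOnWith.dist_le_dist_add_mul {α β : Type*} [PseudoMetricSpace α]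
    [PseudoMetricSpace β] {K : ℝ≥0} {f : α → β} {s : Set α} (hf : LipschitzOnWith K f s)
    {x c : α} (hx : x ∈ s) (hc : c ∈ s) (z : β) :
    dist (f x) z ≤ dist (f c) z + K * dist x c :=
  calc dist (f x) z ≤ dist (f x) (f c) + dist (f c) z := dist_triangle _ _ _
    _ ≤ K * dist x c + dist (f c) z := by gcongr; exact hf.dist_le_mul x hx c hc
    _ = dist (f c) z + K * dist x c := add_comm _ _

theorem tendstoInMeasure_of_ae_dist_le_of_dist_lt {α ι E F G : Type*} [MeasurableSpace α]
    {μ : Measure α} {l : Filter ι} [PseudoMetricSpace E] [PseudoMetricSpace F]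
    [PseudoMetricSpace G] {X : ι → α → E} {Y : ι → α → F} {Z : ι → α → G}
    {gX : α → E} {gY : α → F} {gZ : α → G}
    (hX : TendstoInMeasure μ X l gX) (hY : TendstoInMeasure μ Y l gY)
    {δ : ℝ} (hδ : 0 < δ) {B : ℝ≥0}
    (hZ : ∀ᶠ i in l, ∀ᵐ ω ∂μ, dist (X i ω) (gX ω) < δ →
      dist (Z i ω) (gZ ω) ≤ dist (Y i ω) (gY ω) + B * dist (X i ω) (gX ω)) :
    TendstoInMeasure μ Z l gZ := by
  rw [tendstoInMeasure_iff_dist] at hX hY ⊢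
  intro ε hε
  set r : ℝ := min δ (ε / (2 * (B + 1)))
  have hr : 0 < r := lt_min hδ (by positivity)
  have hBr : (B : ℝ) * r ≤ ε / 2 :=
    calc (B : ℝ) * r ≤ (B + 1) * (ε / (2 * (B + 1))) := by
          gcongr
          · linarith
          · exact min_le_right _ _
      _ = ε / 2 := by field_simp
  have hbound : ∀ᶠ i in l, μ {ω | ε ≤ dist (Z i ω) (gZ ω)} ≤
      μ {ω | r ≤ dist (X i ω) (gX ω)} + μ {ω | ε / 2 ≤ dist (Y i ω) (gY ω)} := by
    filter_upwards [hZ] with i hi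
    calc μ {ω | ε ≤ dist (Z i ω) (gZ ω)}
        ≤ μ ({ω | r ≤ dist (X i ω) (gX ω)} ∪ {ω | ε / 2 ≤ dist (Y i ω) (gY ω)}) := by
          refine measure_mono_ae ?_
          filter_upwards [hi] with ω hω (hZε : ε ≤ dist (Z i ω) (gZ ω))
          show r ≤ dist (X i ω) (gX ω) ∨ ε / 2 ≤ dist (Y i ω) (gY ω)
          by_contra! hsmall
          have hXr : (B : ℝ) * dist (X i ω) (gX ω) ≤ B * r := by gcongr; exact hsmall.1.le
          linarith [hω (hsmall.1.trans_le (min_le_left _ _))]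
      _ ≤ _ := measure_union_le _ _
  refine tendsto_of_tendsto_of_tendsto_of_le_of_le' tendsto_const_nhds ?_
    (Eventually.of_forall fun _ => zero_le) hbound
  simpa using (hX r hr).add (hY (ε / 2) (by positivity))

theorem plugin_consistency_lipschitz_general
    {Ω : Type*} [MeasurableSpace Ω] (P : Measure Ω)
    (p q : ℕ)
    (ηstar : EuclideanSpace ℝ (Fin q)) (θstar : EuclideanSpace ℝ (Fin p))
    (ηhat : ℕ → Ω → EuclideanSpace ℝ (Fin q))
    (θhat : ℕ → Ω × EuclideanSpace ℝ (Fin q) → EuclideanSpace ℝ (Fin p))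
    (hi : TendstoInMeasure P (fun m ω => ηhat m ω) atTop (fun _ => ηstar))
    (hii : TendstoInMeasure P (fun n ω => θhat n (ω, ηstar)) atTop (fun _ => θstar))
    (hiii : ∃ n₀ : ℕ, ∃ δ > (0 : ℝ), ∃ B : NNReal, ∀ n > n₀,
      ∀ᵐ ω ∂P, LipschitzOnWith B (fun η => θhat n (ω, η)) (Metric.ball ηstar δ)) :
    TendstoInMeasure P (fun nm : ℕ × ℕ => fun ω => θhat nm.1 (ω, ηhat nm.2 ω))
      (atTop ×ˢ atTop) (fun _ => θstar) := by
  obtain ⟨n₀, δ, hδ, B, hLip⟩ := hiii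
  refine tendstoInMeasure_of_ae_dist_le_of_dist_lt (hi.comp tendsto_snd) (hii.comp tendsto_fst)
    hδ (B := B) ?_
  filter_upwards [(eventually_gt_atTop n₀).prod_inl atTop] with nm hn
  filter_upwards [hLip nm.1 hn] with ω hω hball
  exact hω.dist_le_dist_add_mul (Metric.mem_ball.2 hball) (Metric.mem_ball_self hδ) θstar

/-- **Plug-in consistency** (Lipschitz version).  If `η̂ₘ` is consistent for `η*`,
`θ̂ₙ(·, η*)` is consistent for `θ*`, and for all large `n` the map `η ↦ θ̂ₙ(ω, η)`
is a.s. Lipschitz with a uniform constant on a ball around `η*`, then the plug-in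
estimator `θ̂ₙ(·, η̂ₘ(·))` is consistent for `θ*` as `n, m → ∞` jointly. -/
theorem plugin_consistency_lipschitz
    {Ω : Type*} [MeasurableSpace Ω] (P : Measure Ω) [IsProbabilityMeasure P]
    (p q : ℕ) (hp : 0 < p) (hq : 0 < q)
    (ηstar : EuclideanSpace ℝ (Fin q)) (θstar : EuclideanSpace ℝ (Fin p))
    (ηhat : ℕ → Ω → EuclideanSpace ℝ (Fin q))
    (θhat : ℕ → Ω × EuclideanSpace ℝ (Fin q) → EuclideanSpace ℝ (Fin p))
    (hηmeas : ∀ m, Measurable (ηhat m))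
    (hθmeas : ∀ n, Measurable (θhat n))
    (hi : TendstoInMeasure P (fun m ω => ηhat m ω) atTop (fun _ => ηstar))
    (hii : TendstoInMeasure P (fun n ω => θhat n (ω, ηstar)) atTop (fun _ => θstar))
    (hiii : ∃ n₀ : ℕ, ∃ δ > (0 : ℝ), ∃ B : NNReal, ∀ n > n₀,
      ∀ᵐ ω ∂P, LipschitzOnWith B (fun η => θhat n (ω, η)) (Metric.ball ηstar δ)) :
    TendstoInMeasure P (fun nm : ℕ × ℕ => fun ω => θhat nm.1 (ω, ηhat nm.2 ω))
      (atTop ×ˢ atTop) (fun _ => θstar) :=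
  plugin_consistency_lipschitz_general P p q ηstar θstar ηhat θhat hi hii hiii
end
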